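/- Let (X,κ) and (Y,λ) be digital images and let f,g ∈ Y^X with f Φ(κ,λ)-adjacent to g. Then for every A ∈ 2^X, the images satisfy f(A) ⟷≤_{λ'} g(A) in 2^Y (i.e., f(A) and g(A) are λ'-adjacent or equal). -/

import Mathlib

/-- `a` and `b` are adjacent or equal ("⟷≤") with respect to adjacency relation `α`. -/
def AdjEq {A : Type*} (α : A → A → Prop) (a b : A) : Prop := α a b ∨ a = b

/-- `f : (X,κ) → (Y,lam)` is digitally continuous: adjacency is sent to
adjacency-or-equality. -/
def DigCont {X Y : Type*} (κ : X → X → Prop) (lam : Y → Y → Prop) (f : X → Y) : Prop :=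
  ∀ x x', κ x x' → AdjEq lam (f x) (f x')

/-- Continuity of `f` relative to carrier sets: `f` maps `S` into `T` and sends
`α`-adjacent elements of `S` to `β`-adjacent-or-equal elements. -/
def ContOn {A B : Type*} (α : A → A → Prop) (β : B → B → Prop)
    (S : Set A) (T : Set B) (f : A → B) : Prop :=
  (∀ a ∈ S, f a ∈ T) ∧ ∀ a ∈ S, ∀ a' ∈ S, α a a' → AdjEq β (f a) (f a')

/-- The hyperspace adjacency `κ'`: distinct `A, B` are adjacent iff every point of `A`
is adjacent-or-equal to some point of `B` and vice versa. -/
def HyperAdj {X : Type*} (κ : X → X → Prop) (A B : Finset X) : Prop :=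
  A ≠ B ∧ (∀ a ∈ A, ∃ b ∈ B, AdjEq κ a b) ∧ ∀ b ∈ B, ∃ a ∈ A, AdjEq κ b a

/-- A subset `S` is connected w.r.t. adjacency `α`: any two of its points are joined by
a path (finite sequence of consecutively adjacent-or-equal points) lying in `S`. -/
def ConnIn {A : Type*} (α : A → A → Prop) (S : Set A) : Prop :=
  ∀ a ∈ S, ∀ b ∈ S, ∃ (n : ℕ) (p : ℕ → A), p 0 = a ∧ p n = b ∧
    (∀ i ≤ n, p i ∈ S) ∧ ∀ i < n, AdjEq α (p i) (p (i + 1))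

/-- `a` and `b` are joined by a path lying in `S` (i.e. they are in the same
connected component of the graph induced on `S`). -/
def Chain {A : Type*} (α : A → A → Prop) (S : Set A) (a b : A) : Prop :=
  ∃ (n : ℕ) (p : ℕ → A), p 0 = a ∧ p n = b ∧
    (∀ i ≤ n, p i ∈ S) ∧ ∀ i < n, AdjEq α (p i) (p (i + 1))

/-- The carrier of the hyperspace `2^X`: nonempty finite subsets of `X`. -/
def TwoX (X : Type*) : Set (Finset X) := {A | A.Nonempty}

/-- The carrier of `K(X,κ')`: nonempty finite κ-connected subsets of `X`. -/
def KSet {X : Type*} (κ : X → X → Prop) : Set (Finset X) :=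
  {A | A.Nonempty ∧ ConnIn κ (A : Set X)}

/-- A digital homotopy from `f` to `g`, relative to carriers `S`, `T`:
a function `F : S × [0,m] → T` with `F(·,0) = f`, `F(·,m) = g`, all tracks
`t ↦ F(a,t)` are paths, and all time slices `a ↦ F(a,t)` are continuous. -/
def HtpyOn {A B : Type*} (α : A → A → Prop) (β : B → B → Prop)
    (S : Set A) (T : Set B) (f g : A → B) : Prop :=
  ∃ (m : ℕ) (F : A → ℕ → B),
    (∀ a ∈ S, ∀ t ≤ m, F a t ∈ T) ∧
    (∀ a ∈ S, F a 0 = f a) ∧ (∀ a ∈ S, F a m = g a) ∧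
    (∀ a ∈ S, ∀ t < m, AdjEq β (F a t) (F a (t + 1))) ∧
    (∀ t ≤ m, ∀ a ∈ S, ∀ a' ∈ S, α a a' → AdjEq β (F a t) (F a' t))

/-- A digital homotopy from `f` to `g` in exactly `m` steps (on full types). -/
def HtpyN {X Y : Type*} (κ : X → X → Prop) (lam : Y → Y → Prop)
    (f g : X → Y) (m : ℕ) : Prop :=
  ∃ F : X → ℕ → Y,
    (∀ x, F x 0 = f x) ∧ (∀ x, F x m = g x) ∧
    (∀ x, ∀ t < m, AdjEq lam (F x t) (F x (t + 1))) ∧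
    (∀ t ≤ m, DigCont κ lam fun x => F x t)

/-- `f` and `g` are digitally homotopic. -/
def Htpy {X Y : Type*} (κ : X → X → Prop) (lam : Y → Y → Prop) (f g : X → Y) : Prop :=
  ∃ m, HtpyN κ lam f g m

/-- The graphs on carriers `S` and `T` have the same homotopy type. -/
def HtpyEquivOn {A B : Type*} (α : A → A → Prop) (β : B → B → Prop)
    (S : Set A) (T : Set B) : Prop :=
  ∃ (f : A → B) (g : B → A),
    ContOn α β S T f ∧ ContOn β α T S g ∧
    HtpyOn α α S S (g ∘ f) id ∧ HtpyOn β β T T (f ∘ g) id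

/-- The graph on carrier `S` is contractible: the identity is homotopic to a constant. -/
def ContractibleOn {A : Type*} (α : A → A → Prop) (S : Set A) : Prop :=
  ∃ c ∈ S, HtpyOn α α S S id fun _ => c

/-- `Φ`-adjacency of functions: `f ≠ g` and `f(x) ⟷≤ g(x)` for all `x`. -/
def PhiAdj {X Y : Type*} (lam : Y → Y → Prop) (f g : X → Y) : Prop :=
  f ≠ g ∧ ∀ x, AdjEq lam (f x) (g x)

/-- `Ψ`-adjacency of functions: `f ≠ g` and `x₀ ⟷≤ x₁` implies `f(x₀) ⟷≤ g(x₁)`. -/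
def PsiAdj {X Y : Type*} (κ : X → X → Prop) (lam : Y → Y → Prop) (f g : X → Y) : Prop :=
  f ≠ g ∧ ∀ x₀ x₁, AdjEq κ x₀ x₁ → AdjEq lam (f x₀) (g x₁)

/-- `C` is a connected component of the graph induced on the vertex set `V`:
a maximal connected subset of `V`. -/
def IsComponentIn {A : Type*} (α : A → A → Prop) (V C : Set A) : Prop :=
  C ⊆ V ∧ ConnIn α C ∧ ∀ C' : Set A, C' ⊆ V → ConnIn α C' → C ⊆ C' → C' = C

theorem AdjEq.symm {A : Type*} {α : A → A → Prop} (hsymm : ∀ a b, α a b → α b a)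
    {a b : A} : AdjEq α a b → AdjEq α b a
  | .inl h => .inl (hsymm a b h)
  | .inr h => .inr h.symm

theorem adjEq_hyperAdj_of_forall_exists {X : Type*} {κ : X → X → Prop} {A B : Finset X}
    (hAB : ∀ a ∈ A, ∃ b ∈ B, AdjEq κ a b) (hBA : ∀ b ∈ B, ∃ a ∈ A, AdjEq κ b a) :
    AdjEq (HyperAdj κ) A B := by
  by_cases h : A = B
  · exact .inr h
  · exact .inl ⟨h, hAB, hBA⟩

theorem adjEq_hyperAdj_image_image {X Y : Type*} [DecidableEq Y] {lam : Y → Y → Prop}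
    (hlsymm : ∀ x y, lam x y → lam y x) {f g : X → Y} (hfg : ∀ x, AdjEq lam (f x) (g x))
    (A : Finset X) : AdjEq (HyperAdj lam) (A.image f) (A.image g) := by
  refine adjEq_hyperAdj_of_forall_exists ?_ ?_
  · simp only [Finset.mem_image]
    rintro _ ⟨a, ha, rfl⟩
    exact ⟨g a, ⟨a, ha, rfl⟩, hfg a⟩
  · simp only [Finset.mem_image]
    rintro _ ⟨a, ha, rfl⟩
    exact ⟨f a, ⟨a, ha, rfl⟩, (hfg a).symm hlsymm⟩

theorem stmt9_general {X Y : Type*} [DecidableEq Y]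
    (lam : Y → Y → Prop)
    (hlsymm : ∀ x y, lam x y → lam y x)
    (f g : X → Y)
    (hfg : PhiAdj lam f g) :
    ∀ A ∈ TwoX X, AdjEq (HyperAdj lam) (A.image f) (A.image g) :=
  fun A _ => adjEq_hyperAdj_image_image hlsymm hfg.2 A

/-- if continuous `f, g ∈ Y^X` are `Φ(κ,lam)`-adjacent, then for every
`A ∈ 2^X` the images satisfy `f(A) ⟷≤_{lam'} g(A)` in `2^Y`. -/
theorem stmt9 {X Y : Type*} [DecidableEq Y]
    (κ : X → X → Prop) (lam : Y → Y → Prop)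
    (hκsymm : ∀ x y, κ x y → κ y x) (hκirr : ∀ x, ¬ κ x x)
    (hlsymm : ∀ x y, lam x y → lam y x) (hlirr : ∀ y, ¬ lam y y)
    (f g : X → Y) (hf : DigCont κ lam f) (hg : DigCont κ lam g)
    (hfg : PhiAdj lam f g) :
    ∀ A ∈ TwoX X, AdjEq (HyperAdj lam) (A.image f) (A.image g) :=
  stmt9_general lam hlsymm f g hfg
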